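/- Let K be a field and f₁,…,f_s ∈ K[X₁,…,Xₙ] homogeneous polynomials forming a regular sequence. Then for each degree d and each i ≤ s, the set of polynomials {x^α f_j : 1 ≤ j ≤ i, |α| = d - deg f_j, and x^α ∉ LM(⟨f₁,…,f_{j-1}⟩)} is linearly independent over K and spans ⟨f₁,…,f_i⟩ ∩ A_d. -/

import Mathlib

open MvPolynomial

/-- A monomial order on exponent vectors in `n` variables: a linear order compatible
with addition for which `0` is smallest. -/
structure MonOrder (n : ℕ) where
  le : (Fin n →₀ ℕ) → (Fin n →₀ ℕ) → Prop
  le_refl : ∀ a, le a a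
  le_trans : ∀ a b c, le a b → le b c → le a c
  le_antisymm : ∀ a b, le a b → le b a → a = b
  le_total : ∀ a b, le a b ∨ le b a
  add_le_add : ∀ a b c, le a b → le (a + c) (b + c)
  zero_le : ∀ a, le 0 a

/-- Strict comparison for a monomial order. -/
def MonOrder.lt {n : ℕ} (w : MonOrder n) (a b : Fin n →₀ ℕ) : Prop := w.le a b ∧ a ≠ b

/-- Total degree of an exponent vector. -/
def monDeg {n : ℕ} (a : Fin n →₀ ℕ) : ℕ := a.sum fun _ e => e

/-- Divisibility of monomials (on exponent vectors). -/
def MonDvd {n : ℕ} (a b : Fin n →₀ ℕ) : Prop := ∃ c, b = a + c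

/-- `m` is the leading monomial of `f` with respect to `w`. -/
def IsLM {n : ℕ} {K : Type*} [Field K] (w : MonOrder n)
    (f : MvPolynomial (Fin n) K) (m : Fin n →₀ ℕ) : Prop :=
  m ∈ f.support ∧ ∀ m' ∈ f.support, w.le m' m

/-- The set of leading monomials of nonzero elements of the ideal `I`. -/
def LMset {n : ℕ} {K : Type*} [Field K] (w : MonOrder n)
    (I : Ideal (MvPolynomial (Fin n) K)) : Set (Fin n →₀ ℕ) :=
  {m | ∃ f ∈ I, f ≠ 0 ∧ IsLM w f m}

/-- `G` is a Gröbner basis of the ideal `I` with respect to `w`. -/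
def IsGB {n : ℕ} {K : Type*} [Field K] (w : MonOrder n)
    (G : Set (MvPolynomial (Fin n) K)) (I : Ideal (MvPolynomial (Fin n) K)) : Prop :=
  G.Finite ∧ G ⊆ ↑I ∧ ∀ f ∈ I, f ≠ 0 → ∃ g ∈ G, ∃ mg mf,
    IsLM w g mg ∧ IsLM w f mf ∧ MonDvd mg mf

/-- `G` is the reduced Gröbner basis of `I`: a Gröbner basis whose elements are monic
and such that no monomial of an element is divisible by the leading monomial of
another element. -/
def IsReducedGB {n : ℕ} {K : Type*} [Field K] (w : MonOrder n)
    (G : Set (MvPolynomial (Fin n) K)) (I : Ideal (MvPolynomial (Fin n) K)) : Prop :=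
  IsGB w G I ∧ (∀ g ∈ G, ∀ m, IsLM w g m → MvPolynomial.coeff m g = 1) ∧
  ∀ g ∈ G, ∀ g' ∈ G, g ≠ g' → ∀ m ∈ g.support, ∀ m', IsLM w g' m' → ¬ MonDvd m' m

/-- `I` is a weakly-`w`-ideal: for every leading monomial `α` of an element of the
reduced Gröbner basis of `I`, every monomial `β` of the same degree with `β > α`
belongs to `LM(I)`. -/
def IsWeaklyW {n : ℕ} {K : Type*} [Field K] (w : MonOrder n)
    (I : Ideal (MvPolynomial (Fin n) K)) : Prop :=
  ∀ G, IsReducedGB w G I → ∀ g ∈ G, ∀ α, IsLM w g α →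
    ∀ β, monDeg β = monDeg α → w.lt α β → β ∈ LMset w I

/-!
Spanning: a row `x^α f_j` with `x^α = LM(g)`, `g ∈ ⟨f_{<j}⟩` homogeneous and monic, splits
as `g f_j + (x^α - g) f_j`. The first summand lies in `⟨f_{<j}⟩ ∩ A_d`, which is spanned by
kept rows by induction on `i`; the second involves only monomials of degree `|α|` below `α`,
handled by induction along `w`, which is well founded on the finitely many monomials of one
degree.

Independence: in a relation `∑ g_j f_j = 0` among kept rows, the nonzero `g_j` of largest
index satisfies `g_j f_j ∈ ⟨f_{<j}⟩`, hence `g_j ∈ ⟨f_{<j}⟩` by regularity, so its leading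
monomial lies in `LM(⟨f_{<j}⟩)`, which no kept row uses.
-/

theorem monDeg_eq_degree {n : ℕ} (a : Fin n →₀ ℕ) : monDeg a = a.degree := rfl

namespace MonOrder

variable {n : ℕ} (w : MonOrder n)

instance isStrictOrder_lt : IsStrictOrder (Fin n →₀ ℕ) w.lt where
  irrefl _ h := h.2 rfl
  trans _ _ _ hab hbc :=
    ⟨w.le_trans _ _ _ hab.1 hbc.1, fun hac => hab.2 (w.le_antisymm _ _ hab.1 (hac ▸ hbc.1))⟩

theorem exists_max (S : Finset (Fin n →₀ ℕ)) (hS : S.Nonempty) :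
    ∃ m ∈ S, ∀ m' ∈ S, w.le m' m := by
  induction hS using Finset.Nonempty.cons_induction with
  | singleton a => exact ⟨a, by simp, by simpa using w.le_refl a⟩
  | cons a S _ _ ih =>
    obtain ⟨m, hm, hmax⟩ := ih
    rcases w.le_total a m with ham | hma
    · exact ⟨m, by simp [hm], by simpa [ham] using hmax⟩
    · exact ⟨a, by simp, by
        simpa [w.le_refl a] using fun m' hm' => w.le_trans _ _ _ (hmax m' hm') hma⟩

theorem exists_isLM {K : Type*} [Field K] {f : MvPolynomial (Fin n) K} (hf : f ≠ 0) :
    ∃ m, IsLM w f m :=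
  (w.exists_max f.support (support_nonempty.2 hf)).imp fun _ => id

end MonOrder

section Homogeneous

variable {n : ℕ} {K : Type*} [Field K]

attribute [local instance] MvPolynomial.gradedAlgebra

theorem isHomogeneous_span_image {ι : Type*} {f : ι → MvPolynomial (Fin n) K} {dg : ι → ℕ}
    (hhom : ∀ j, (f j).IsHomogeneous (dg j)) (U : Set ι) :
    (Ideal.span (f '' U)).IsHomogeneous (homogeneousSubmodule (Fin n) K) :=
  Ideal.homogeneous_span _ _ (by rintro _ ⟨j, -, rfl⟩; exact ⟨dg j, hhom j⟩)

theorem monomial_mul_eq_smul (β : Fin n →₀ ℕ) (c : K) (f : MvPolynomial (Fin n) K) :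
    monomial β c * f = c • (monomial β 1 * f) := by
  rw [← smul_mul_assoc, smul_monomial, smul_eq_mul, mul_one]

theorem mul_mem_of_forall_monomial_mul_mem {M : Submodule K (MvPolynomial (Fin n) K)}
    {p f : MvPolynomial (Fin n) K} (h : ∀ β ∈ p.support, monomial β 1 * f ∈ M) :
    p * f ∈ M := by
  rw [p.as_sum, Finset.sum_mul]
  refine Submodule.sum_mem _ fun β hβ => ?_
  rw [monomial_mul_eq_smul]
  exact M.smul_mem _ (h β hβ)

theorem homogeneousComponent_mul_mem {M : Submodule K (MvPolynomial (Fin n) K)}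
    {f : MvPolynomial (Fin n) K} {m d : ℕ} (hf : f.IsHomogeneous m)
    (hM : ∀ β, monDeg β + m = d → monomial β 1 * f ∈ M) (a : MvPolynomial (Fin n) K) :
    homogeneousComponent d (a * f) ∈ M := by
  induction a using MvPolynomial.induction_on' with
  | monomial β c =>
    have hβ : monomial β (1 : K) * f ∈ homogeneousSubmodule (Fin n) K (monDeg β + m) :=
      (isHomogeneous_monomial 1 rfl).mul hf
    rw [monomial_mul_eq_smul, map_smul, homogeneousComponent_of_mem hβ]
    split_ifs with hd
    · exact M.smul_mem _ (hM β hd.symm)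
    · simp
  | add p q hp hq => rw [add_mul, map_add]; exact M.add_mem hp hq

theorem le_of_forall_monomial_mul_mem {ι : Type*} {f : ι → MvPolynomial (Fin n) K}
    {dg : ι → ℕ} (hhom : ∀ j, (f j).IsHomogeneous (dg j)) {U : Set ι} {d : ℕ}
    {M : Submodule K (MvPolynomial (Fin n) K)}
    (hM : ∀ j ∈ U, ∀ β, monDeg β + dg j = d → monomial β 1 * f j ∈ M) :
    (Ideal.span (f '' U)).restrictScalars K ⊓ homogeneousSubmodule (Fin n) K d ≤ M := by
  have key : ∀ x ∈ Ideal.span (f '' U), ∀ a, homogeneousComponent d (a * x) ∈ M := by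
    intro x hx
    induction hx using Submodule.span_induction with
    | mem x hx =>
      obtain ⟨j, hj, rfl⟩ := hx
      exact homogeneousComponent_mul_mem (hhom j) (hM j hj)
    | zero => simp
    | add x y _ _ hx hy => intro a; rw [mul_add, map_add]; exact M.add_mem (hx a) (hy a)
    | smul b x _ hx => intro a; rw [smul_eq_mul, ← mul_assoc]; exact hx (a * b)
  rintro q ⟨hqI, hqd⟩
  simpa [homogeneousComponent_eq_self hqd] using key q hqI 1

theorem exists_sub_mem_of_mem_LMset (w : MonOrder n) {I : Ideal (MvPolynomial (Fin n) K)}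
    (hI : I.IsHomogeneous (homogeneousSubmodule (Fin n) K)) {α : Fin n →₀ ℕ}
    (hα : α ∈ LMset w I) :
    ∃ r : MvPolynomial (Fin n) K, r.IsHomogeneous (monDeg α) ∧ monomial α 1 - r ∈ I ∧
      ∀ β ∈ r.support, w.lt β α := by
  obtain ⟨h, hhI, -, hαh, hmax⟩ := hα
  have hc : coeff α h ≠ 0 := mem_support_iff.1 hαh
  set g := C (coeff α h)⁻¹ * homogeneousComponent (monDeg α) h
  have hgα : coeff α g = 1 := by
    rw [coeff_C_mul, coeff_homogeneousComponent, ← monDeg_eq_degree, if_pos rfl,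
      inv_mul_cancel₀ hc]
  refine ⟨monomial α 1 - g, (isHomogeneous_monomial 1 rfl).sub
      ((homogeneousComponent_isHomogeneous _ h).C_mul _), ?_, fun β hβ => ?_⟩
  · rw [sub_sub_cancel]
    exact I.mul_mem_left _ (homogeneousComponent_mem_of_mem hI hhI _)
  have hβα : β ≠ α := by rintro rfl; simp [hgα] at hβ
  have hβh : β ∈ h.support := by
    simp only [g, mem_support_iff, coeff_sub, coeff_monomial, if_neg hβα.symm, coeff_C_mul,
      coeff_homogeneousComponent] at hβ
    aesop
  exact ⟨hmax β hβh, hβα⟩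

theorem monomial_mul_mem_of_forall_notMem_LMset (w : MonOrder n)
    {I : Ideal (MvPolynomial (Fin n) K)}
    (hI : I.IsHomogeneous (homogeneousSubmodule (Fin n) K)) {f : MvPolynomial (Fin n) K}
    {m d : ℕ} (hf : f.IsHomogeneous m) {M : Submodule K (MvPolynomial (Fin n) K)}
    (hIM : I.restrictScalars K ⊓ homogeneousSubmodule (Fin n) K d ≤ M)
    (hM : ∀ α, monDeg α + m = d → α ∉ LMset w I → monomial α 1 * f ∈ M)
    (α : Fin n →₀ ℕ) (hα : monDeg α + m = d) : monomial α 1 * f ∈ M := by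
  have hfin : {β : Fin n →₀ ℕ | monDeg β + m = d}.Finite :=
    (Finsupp.finite_of_degree_le d).subset fun β (hβ : monDeg β + m = d) =>
      show β.degree ≤ d by rw [← monDeg_eq_degree]; omega
  refine (hfin.wellFoundedOn (r := w.lt)).induction (P := fun β => monomial β 1 * f ∈ M) hα
    fun β hβ ih => ?_
  by_cases hstd : β ∈ LMset w I
  · obtain ⟨r, hr, hrI, hrlt⟩ := exists_sub_mem_of_mem_LMset w hI hstd
    rw [← sub_add_cancel (monomial β 1) r, add_mul]
    refine M.add_mem (hIM ⟨I.mul_mem_right _ hrI, ?_⟩) (mul_mem_of_forall_monomial_mul_mem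
      fun γ hγ => ih γ ?_ (hrlt γ hγ))
    · exact hβ ▸ ((isHomogeneous_monomial 1 rfl).sub hr).mul hf
    · have hγdeg : γ.degree = monDeg β := by
        rw [Finsupp.degree_eq_weight_one]; exact hr (mem_support_iff.1 hγ)
      show monDeg γ + m = d
      rwa [monDeg_eq_degree, hγdeg]
  · exact hM β hβ hstd

end Homogeneous

section Regular

variable {n : ℕ} {K : Type*} [Field K] (w : MonOrder n)

theorem eq_zero_of_sum_mul_eq_zero_of_regular {ι : Type*} [LinearOrder ι] [Fintype ι]
    {f : ι → MvPolynomial (Fin n) K}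
    (hreg : ∀ j g, g * f j ∈ Ideal.span (f '' {j' | j' < j}) →
      g ∈ Ideal.span (f '' {j' | j' < j}))
    {G : ι → MvPolynomial (Fin n) K}
    (hG : ∀ j, ∀ α ∈ (G j).support, α ∉ LMset w (Ideal.span (f '' {j' | j' < j})))
    (hsum : ∑ j, G j * f j = 0) : G = 0 := by
  classical
  by_contra hG0
  obtain ⟨j, hj, hmax⟩ := (Finset.univ.filter fun j => G j ≠ 0).exists_max_image id
    (by simpa [Finset.filter_nonempty_iff, funext_iff] using hG0)
  replace hj : G j ≠ 0 := (Finset.mem_filter.1 hj).2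
  have hrest : ∑ j' ∈ Finset.univ.erase j, G j' * f j' ∈ Ideal.span (f '' {j' | j' < j}) := by
    refine Ideal.sum_mem _ fun j' hj' => ?_
    rcases lt_or_gt_of_ne (Finset.ne_of_mem_erase hj') with hlt | hgt
    · exact Ideal.mul_mem_left _ _ (Ideal.subset_span ⟨j', hlt, rfl⟩)
    · have : G j' = 0 := by_contra fun h => (hmax j' (by simpa using h)).not_gt hgt
      simp [this]
  have hGj : G j * f j ∈ Ideal.span (f '' {j' | j' < j}) := by
    rw [← Finset.add_sum_erase _ _ (Finset.mem_univ j), add_eq_zero_iff_eq_neg] at hsum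
    exact hsum ▸ neg_mem hrest
  obtain ⟨α, hα⟩ := w.exists_isLM hj
  exact hG j α hα.1 ⟨G j, hreg j _ hGj, hj, hα⟩

theorem linearIndependent_monomial_mul {ι : Type*} [LinearOrder ι] [Fintype ι]
    {f : ι → MvPolynomial (Fin n) K}
    (hreg : ∀ j g, g * f j ∈ Ideal.span (f '' {j' | j' < j}) →
      g ∈ Ideal.span (f '' {j' | j' < j}))
    (P : ι × (Fin n →₀ ℕ) → Prop)
    (hP : ∀ p, P p → p.2 ∉ LMset w (Ideal.span (f '' {j' | j' < p.1}))) :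
    LinearIndependent K (fun p : {p // P p} => monomial p.1.2 (1 : K) * f p.1.1) := by
  classical
  -- The rows are the images of the basis vectors `x^α e_j` of `A^ι` under
  -- `(g_j) ↦ ∑ g_j f_j`, which is injective on the span of those with `x^α ∉ LM(⟨f_{<j}⟩)`.
  let v : {p // P p} → ι → MvPolynomial (Fin n) K :=
    fun p => Pi.single p.1.1 (monomial p.1.2 1)
  let Φ := (Fintype.linearCombination (MvPolynomial (Fin n) K) f).restrictScalars K
  have hv : LinearIndependent K v := by
    have := (Pi.basis fun _ : ι => basisMonomials (Fin n) K).linearIndependent.comp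
      (fun p : {p // P p} => (⟨p.1.1, p.1.2⟩ : Σ _ : ι, Fin n →₀ ℕ)) fun p q h => by
        simp only [Sigma.mk.injEq, heq_eq_eq] at h
        exact Subtype.ext (Prod.ext h.1 h.2)
    simpa [v, Function.comp_def] using this
  have hspan : Submodule.span K (Set.range v) ≤ Submodule.pi Set.univ fun j =>
      restrictSupport K {α | α ∉ LMset w (Ideal.span (f '' {j' | j' < j}))} := by
    rw [Submodule.span_le]
    rintro _ ⟨p, rfl⟩ j -
    rcases eq_or_ne j p.1.1 with rfl | hj
    · simpa [v, mem_restrictSupport_iff, support_monomial] using hP p.1 p.2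
    · simp [v, Pi.single_eq_of_ne hj]
  have hfam : (fun p : {p // P p} => monomial p.1.2 (1 : K) * f p.1.1) = Φ ∘ v := by
    ext p; simp [Φ, v, Fintype.linearCombination_apply_single]
  rw [hfam]
  refine hv.map (Submodule.disjoint_def.2 fun G hG hΦ =>
    eq_zero_of_sum_mul_eq_zero_of_regular w hreg (fun j => hspan hG j trivial) ?_)
  simpa [Φ, Fintype.linearCombination_apply] using hΦ

end Regular

section F5Rows

variable {n s : ℕ} {K : Type*} [Field K] (w : MonOrder n)
  (f : Fin s → MvPolynomial (Fin n) K) (dg : Fin s → ℕ)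

/-- The rows of the Macaulay matrix `Mac_d(f₁, …, f_i)` kept by the F5 criterion. -/
def f5Rows (d i : ℕ) : Set (MvPolynomial (Fin n) K) :=
  Set.range fun p : {p : Fin s × (Fin n →₀ ℕ) // (p.1 : ℕ) < i ∧
      monDeg p.2 + dg p.1 = d ∧ p.2 ∉ LMset w (Ideal.span (f '' {j' | j' < p.1}))} =>
    monomial p.1.2 (1 : K) * f p.1.1

theorem f5Rows_mono {d i i' : ℕ} (h : i ≤ i') : f5Rows w f dg d i ⊆ f5Rows w f dg d i' := by
  rintro _ ⟨⟨p, hp, hdeg, hstd⟩, rfl⟩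
  exact ⟨⟨p, hp.trans_le h, hdeg, hstd⟩, rfl⟩

theorem span_f5Rows (hhom : ∀ j, (f j).IsHomogeneous (dg j)) (d i : ℕ) :
    Submodule.span K (f5Rows w f dg d i) =
      (Ideal.span (f '' {j | (j : ℕ) < i})).restrictScalars K ⊓
        homogeneousSubmodule (Fin n) K d := by
  induction i using Nat.strong_induction_on with
  | _ i ih =>
  refine le_antisymm (Submodule.span_le.2 ?_)
    (le_of_forall_monomial_mul_mem hhom fun j hj α hα => ?_)
  · rintro _ ⟨⟨⟨j, α⟩, hj, rfl, -⟩, rfl⟩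
    exact ⟨Ideal.mul_mem_left _ _ (Ideal.subset_span ⟨j, hj, rfl⟩),
      (isHomogeneous_monomial 1 rfl).mul (hhom j)⟩
  · exact monomial_mul_mem_of_forall_notMem_LMset w (isHomogeneous_span_image hhom _) (hhom j)
      ((ih j hj).ge.trans (Submodule.span_mono (f5Rows_mono w f dg hj.le)))
      (fun β hβ hstd => Submodule.subset_span ⟨⟨(j, β), hj, hβ, hstd⟩, rfl⟩) α hα

end F5Rows

theorem f5_criterion_general {n s : ℕ} {K : Type*} [Field K]
    (w : MonOrder n) (f : Fin s → MvPolynomial (Fin n) K) (dg : Fin s → ℕ)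
    (hhom : ∀ j, (f j).IsHomogeneous (dg j))
    (hreg : ∀ j : Fin s, ∀ g, g * f j ∈ Ideal.span (f '' {j' | j' < j}) →
      g ∈ Ideal.span (f '' {j' | j' < j}))
    (d i : ℕ) :
    LinearIndependent K
      (fun p : {p : Fin s × (Fin n →₀ ℕ) // (p.1 : ℕ) < i ∧ monDeg p.2 + dg p.1 = d ∧
            p.2 ∉ LMset w (Ideal.span (f '' {j' | j' < p.1}))} =>
        MvPolynomial.monomial p.1.2 (1 : K) * f p.1.1) ∧
    Submodule.span K
        (Set.range (fun p : {p : Fin s × (Fin n →₀ ℕ) // (p.1 : ℕ) < i ∧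
              monDeg p.2 + dg p.1 = d ∧
              p.2 ∉ LMset w (Ideal.span (f '' {j' | j' < p.1}))} =>
          MvPolynomial.monomial p.1.2 (1 : K) * f p.1.1)) =
      Submodule.restrictScalars K (Ideal.span (f '' {j : Fin s | (j : ℕ) < i})) ⊓
        MvPolynomial.homogeneousSubmodule (Fin n) K d :=
  ⟨linearIndependent_monomial_mul w hreg _ fun _ hp => hp.2.2, span_f5Rows w f dg hhom d i⟩

/-- **The F5 criterion.**  For a regular sequence `f₁, …, f_s` of homogeneous
polynomials, for each degree `d` and each `i ≤ s`, the family
`{x^α f_j : j < i, |α| + deg f_j = d, x^α ∉ LM(⟨f₁,…,f_{j-1}⟩)}` is linearly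
independent over `K` and spans `⟨f₁,…,f_i⟩ ∩ A_d`. -/
theorem f5_criterion {n s : ℕ} {K : Type*} [Field K]
    (w : MonOrder n) (f : Fin s → MvPolynomial (Fin n) K) (dg : Fin s → ℕ)
    (hhom : ∀ j, (f j).IsHomogeneous (dg j))
    (hreg : ∀ j : Fin s, ∀ g, g * f j ∈ Ideal.span (f '' {j' | j' < j}) →
      g ∈ Ideal.span (f '' {j' | j' < j}))
    (d i : ℕ) (hi : i ≤ s) :
    LinearIndependent K
      (fun p : {p : Fin s × (Fin n →₀ ℕ) // (p.1 : ℕ) < i ∧ monDeg p.2 + dg p.1 = d ∧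
            p.2 ∉ LMset w (Ideal.span (f '' {j' | j' < p.1}))} =>
        MvPolynomial.monomial p.1.2 (1 : K) * f p.1.1) ∧
    Submodule.span K
        (Set.range (fun p : {p : Fin s × (Fin n →₀ ℕ) // (p.1 : ℕ) < i ∧
              monDeg p.2 + dg p.1 = d ∧
              p.2 ∉ LMset w (Ideal.span (f '' {j' | j' < p.1}))} =>
          MvPolynomial.monomial p.1.2 (1 : K) * f p.1.1)) =
      Submodule.restrictScalars K (Ideal.span (f '' {j : Fin s | (j : ℕ) < i})) ⊓
        MvPolynomial.homogeneousSubmodule (Fin n) K d :=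
  f5_criterion_general w f dg hhom hreg d i
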